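/- arXiv:0905.4048 — 5 statements merged into one kernel-verified Lean document; each statement's English description precedes it below -/
import Mathlib

section
/- Let q ∈ R be nonzero and let I = qR. The colouring induced by I is perfect — i.e., every isometry g of the complex plane with g(R) = R satisfies, for all x, y ∈ R, x − y ∈ I ⟺ g(x) − g(y) ∈ I — if and only if conj(q) ∈ I. -/
/-!
Complex conjugation maps `ζ` to `ζ⁻¹ = ζ^(n-1)`, so it preserves `R`, and every isometry `g` with
`g(R) = R` has the form `z ↦ a z + b` or `z ↦ a conj(z) + b` with `b = g 0 ∈ R` and `a = g 1 - b` a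
unit of `R` (its inverse is `conj a`). Multiplication by a unit preserves `(q)`, so `g` is a colour
symmetry as soon as conjugation preserves `(q)`, which happens exactly when `conj q ∈ (q)`.
Conversely, conjugation is itself such an isometry, and it sends `q - 0 ∈ (q)` to `conj q - 0`.
-/

open Complex

/-- The primitive `n`-th root of unity `ζ = exp(2πi/n)`. -/
noncomputable def zeta (n : ℕ) : ℂ := Complex.exp (2 * Real.pi * Complex.I / n)

/-- The ring of cyclotomic integers `M_n = ℤ[ζ_n]`, as a subring of `ℂ`. -/
noncomputable def Rn (n : ℕ) : Subring ℂ := Subring.closure {zeta n}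

/-- `ζ_n` as an element of `M_n`. -/
noncomputable def zetaR (n : ℕ) : ↥(Rn n) := ⟨zeta n, Subring.subset_closure rfl⟩

/-- `z ∈ ℂ` lies in the ideal `I` of `Rn n` (viewed inside `ℂ`). -/
def InIdeal (n : ℕ) (I : Ideal ↥(Rn n)) (z : ℂ) : Prop :=
  ∃ w : ↥(Rn n), w ∈ I ∧ (w : ℂ) = z

/-- An isometry of the complex plane: `z ↦ a z + b` or `z ↦ a conj z + b` with `|a| = 1`. -/
def IsIsometry (g : ℂ → ℂ) : Prop :=
  ∃ a b : ℂ, ‖a‖ = 1 ∧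
    ((∀ z, g z = a * z + b) ∨ (∀ z, g z = a * (starRingEnd ℂ) z + b))

/-- An orientation-preserving isometry of the complex plane: `z ↦ a z + b` with `|a| = 1`. -/
def IsOPIsometry (g : ℂ → ℂ) : Prop :=
  ∃ a b : ℂ, ‖a‖ = 1 ∧ ∀ z, g z = a * z + b

/-- `g` is a colour symmetry of the colouring of `Rn n` induced by the ideal `I`. -/
def IsColourSym (n : ℕ) (I : Ideal ↥(Rn n)) (g : ℂ → ℂ) : Prop :=
  ∀ x y : ℂ, x ∈ Rn n → y ∈ Rn n → (InIdeal n I (x - y) ↔ InIdeal n I (g x - g y))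

/-- The colouring induced by `I` is perfect. -/
def IsPerfectColouring (n : ℕ) (I : Ideal ↥(Rn n)) : Prop :=
  ∀ g : ℂ → ℂ, IsIsometry g → g '' (Rn n : Set ℂ) = (Rn n : Set ℂ) → IsColourSym n I g

/-- The colouring induced by `I` is chirally perfect. -/
def IsChirallyPerfectColouring (n : ℕ) (I : Ideal ↥(Rn n)) : Prop :=
  ∀ g : ℂ → ℂ, IsOPIsometry g → g '' (Rn n : Set ℂ) = (Rn n : Set ℂ) → IsColourSym n I g

open ComplexConjugate

lemma zeta_pow_self (n : ℕ) : zeta n ^ n = 1 := by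
  rcases eq_or_ne n 0 with rfl | hn
  · exact pow_zero _
  rw [zeta, ← Complex.exp_nat_mul, mul_div_cancel₀ _ (Nat.cast_ne_zero.2 hn)]
  exact Complex.exp_two_pi_mul_I

lemma conj_zeta_mul_zeta (n : ℕ) : conj (zeta n) * zeta n = 1 := by
  rw [zeta, ← Complex.exp_conj, ← Complex.exp_add, map_div₀, map_mul, map_mul, Complex.conj_I,
    Complex.conj_ofReal, map_ofNat, map_natCast, ← Complex.exp_zero]
  congr 1
  ring

lemma conj_zeta (n : ℕ) : conj (zeta n) = zeta n ^ (n - 1) := by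
  rcases eq_or_ne n 0 with rfl | hn
  · simp [zeta]
  have hζ : zeta n ≠ 0 := Complex.exp_ne_zero _
  refine mul_right_cancel₀ hζ ((conj_zeta_mul_zeta n).trans ?_)
  rw [← pow_succ, Nat.sub_add_cancel (Nat.one_le_iff_ne_zero.2 hn), zeta_pow_self]

lemma conj_mem_Rn {n : ℕ} {x : ℂ} (hx : x ∈ Rn n) : conj x ∈ Rn n := by
  have hmap : (Rn n).map (starRingEnd ℂ) ≤ Rn n := by
    rw [Rn, RingHom.map_closure, Set.image_singleton, Subring.closure_le,
      Set.singleton_subset_iff, SetLike.mem_coe, conj_zeta]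
    exact pow_mem (Subring.subset_closure (Set.mem_singleton _)) _
  exact hmap ⟨x, hx, rfl⟩

lemma conj_image_Rn (n : ℕ) : conj '' (Rn n : Set ℂ) = Rn n :=
  Set.Subset.antisymm (Set.image_subset_iff.2 fun _ => conj_mem_Rn)
    fun z hz => ⟨conj z, conj_mem_Rn hz, Complex.conj_conj z⟩

lemma isIsometry_conj : IsIsometry (starRingEnd ℂ) :=
  ⟨1, 0, norm_one, Or.inr fun z => by simp⟩

lemma InIdeal.mul_left {n : ℕ} {I : Ideal ↥(Rn n)} {a z : ℂ} (ha : a ∈ Rn n)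
    (hz : InIdeal n I z) : InIdeal n I (a * z) := by
  obtain ⟨w, hw, rfl⟩ := hz
  exact ⟨⟨a, ha⟩ * w, I.mul_mem_left _ hw, rfl⟩

lemma inIdeal_span_singleton_iff {n : ℕ} (q : ↥(Rn n)) (z : ℂ) :
    InIdeal n (Ideal.span {q}) z ↔ ∃ s ∈ Rn n, z = s * q := by
  constructor
  · rintro ⟨w, hw, rfl⟩
    obtain ⟨s, rfl⟩ := Ideal.mem_span_singleton'.1 hw
    exact ⟨s, s.2, rfl⟩
  · rintro ⟨s, hs, rfl⟩
    exact ⟨⟨s, hs⟩ * q, Ideal.mem_span_singleton'.2 ⟨⟨s, hs⟩, rfl⟩, rfl⟩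

lemma InIdeal.conj {n : ℕ} {q : ↥(Rn n)} {z : ℂ} (hz : InIdeal n (Ideal.span {q}) z)
    (hq : InIdeal n (Ideal.span {q}) (conj (q : ℂ))) :
    InIdeal n (Ideal.span {q}) (conj z) := by
  obtain ⟨s, hs, rfl⟩ := (inIdeal_span_singleton_iff q z).1 hz
  rw [map_mul]
  exact hq.mul_left (conj_mem_Rn hs)

lemma IsIsometry.exists_unit_of_image_eq {n : ℕ} {g : ℂ → ℂ} (hg : IsIsometry g)
    (hgR : g '' (Rn n : Set ℂ) = Rn n) :
    ∃ a ∈ Rn n, conj a * a = 1 ∧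
      ((∀ x y, g x - g y = a * (x - y)) ∨ ∀ x y, g x - g y = a * conj (x - y)) := by
  obtain ⟨a, b, ha, hcases⟩ := hg
  have hmem : ∀ z ∈ Rn n, g z ∈ Rn n := fun z hz => hgR.subset (Set.mem_image_of_mem g hz)
  have hdiff : g 1 - g 0 = a := by rcases hcases with h | h <;> simp [h]
  refine ⟨a, hdiff ▸ sub_mem (hmem 1 (one_mem _)) (hmem 0 (zero_mem _)), ?_, ?_⟩
  · rw [mul_comm, Complex.mul_conj, Complex.normSq_eq_norm_sq, ha]
    norm_num
  · rcases hcases with h | h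
    · exact Or.inl fun x y => by rw [h, h]; ring
    · exact Or.inr fun x y => by rw [h, h, map_sub]; ring

lemma isColourSym_of_conj_mem {n : ℕ} {q : ↥(Rn n)}
    (hq : InIdeal n (Ideal.span {q}) (conj (q : ℂ))) {g : ℂ → ℂ} (hg : IsIsometry g)
    (hgR : g '' (Rn n : Set ℂ) = Rn n) : IsColourSym n (Ideal.span {q}) g := by
  obtain ⟨a, haR, hinv, hdiff | hdiff⟩ := hg.exists_unit_of_image_eq hgR
    <;> intro x y _ _ <;> rw [hdiff] <;> constructor
  · exact InIdeal.mul_left haR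
  · intro h
    simpa [← mul_assoc, hinv] using h.mul_left (conj_mem_Rn haR)
  · exact fun h => (h.conj hq).mul_left haR
  · intro h
    simpa [← mul_assoc, hinv] using ((h.mul_left (conj_mem_Rn haR)).conj hq)

theorem stmt1_general (n : ℕ) (q : ↥(Rn n)) :
    IsPerfectColouring n (Ideal.span {q}) ↔
      InIdeal n (Ideal.span {q}) ((starRingEnd ℂ) (q : ℂ)) := by
  refine ⟨fun hperf => ?_, fun hq g hg hgR => isColourSym_of_conj_mem hq hg hgR⟩
  have hsym := hperf _ isIsometry_conj (conj_image_Rn n) q 0 q.2 (zero_mem _)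
  simp only [map_zero, sub_zero] at hsym
  exact hsym.1 ⟨q, Ideal.mem_span_singleton_self q, rfl⟩

/-- the colouring induced by `(q)` is perfect iff `conj q ∈ (q)`. -/
theorem stmt1 (n : ℕ) (hn : 3 ≤ n) (hn2 : n % 4 ≠ 2) (q : ↥(Rn n)) (hq : q ≠ 0) :
    IsPerfectColouring n (Ideal.span {q}) ↔
      InIdeal n (Ideal.span {q}) ((starRingEnd ℂ) (q : ℂ)) :=
  stmt1_general n q
end

section
/- Let c : R → S be a surjective map onto a set S of colours such that for every orientation-preserving isometry g of the complex plane with g(R) = R there exists a permutation π of S with c(g(x)) = π(c(x)) for all x ∈ R (i.e., c is a chirally perfect colouring of R). Then J = {x ∈ R : c(x) = c(0)} is an ideal of R, and for every s ∈ S the colour class c⁻¹(s) is a coset of J in R. -/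
open Complex

/-! A chirally perfect colouring is preserved (up to a permutation of colours) by translations
by elements of `R` and by rotations by units of `R` of norm one. Translations make the class `J`
of `0` an additive subgroup, and show `c x = c t ↔ x - t ∈ J`; the rotation by `ζ` makes `J`
stable under multiplication by `ζ`, hence an ideal, since `ζ` generates `R` as a ring. -/

theorem AddSubgroup.exists_ideal_of_generators_mul_mem {A : Type*} [CommRing A]
    {R : Subring A} {s : Set A} (hR : R = Subring.closure s) (J : AddSubgroup R)
    (hJ : ∀ z : R, (z : A) ∈ s → ∀ x ∈ J, z * x ∈ J) :
    ∃ I : Ideal R, ∀ x, x ∈ I ↔ x ∈ J := by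
  subst hR
  have mul_mem : ∀ r : Subring.closure s, ∀ x ∈ J, r * x ∈ J := by
    rintro ⟨r, hr⟩
    induction hr using Subring.closure_induction with
    | mem z hz => exact hJ ⟨z, _⟩ hz
    | zero => intro x _; convert J.zero_mem; exact zero_mul x
    | one => intro x hx; convert hx; exact one_mul x
    | add a b ha hb iha ihb =>
      intro x hx; convert J.add_mem (iha x hx) (ihb x hx) using 1; exact add_mul ⟨a, ha⟩ ⟨b, hb⟩ x
    | neg a ha iha =>
      intro x hx; convert J.neg_mem (iha x hx) using 1; exact neg_mul ⟨a, ha⟩ x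
    | mul a b ha hb iha ihb =>
      intro x hx; convert iha _ (ihb x hx) using 1; exact mul_assoc ⟨a, ha⟩ ⟨b, hb⟩ x
  exact ⟨{ J.toAddSubmonoid with smul_mem' := mul_mem }, fun _ => Iff.rfl⟩

theorem Subring.image_add_right {R : Subring ℂ} {v : ℂ} (hv : v ∈ R) :
    (· + v) '' (R : Set ℂ) = R := by
  ext z
  refine ⟨?_, fun hz => ⟨z - v, R.sub_mem hz hv, sub_add_cancel z v⟩⟩
  rintro ⟨w, hw, rfl⟩
  exact R.add_mem hw hv

theorem Subring.image_mul_left_of_isUnit {R : Subring ℂ} {u : R} (hu : IsUnit u) :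
    (fun z => (u : ℂ) * z) '' (R : Set ℂ) = R := by
  ext z
  constructor
  · rintro ⟨w, hw, rfl⟩
    exact R.mul_mem u.2 hw
  · intro hz
    refine ⟨((hu.unit⁻¹ : Rˣ) : R) * z, R.mul_mem (SetLike.coe_mem _) hz, ?_⟩
    dsimp only
    rw [← mul_assoc, ← Subring.coe_mul, IsUnit.mul_val_inv, Subring.coe_one, one_mul]

def IsChirallyPerfect {S : Type*} (R : Set ℂ) (c : ℂ → S) : Prop :=
  ∀ g : ℂ → ℂ, IsOPIsometry g → g '' R = R → ∃ π : Equiv.Perm S, ∀ x ∈ R, c (g x) = π (c x)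

namespace IsChirallyPerfect

variable {S : Type*} {R : Subring ℂ} {c : ℂ → S} {x y : ℂ}

theorem apply_eq_apply {g : ℂ → ℂ} (hc : IsChirallyPerfect R c) (hg : IsOPIsometry g)
    (hgR : g '' (R : Set ℂ) = R) (hx : x ∈ R) (hy : y ∈ R) (hxy : c x = c y) :
    c (g x) = c (g y) := by
  obtain ⟨π, hπ⟩ := hc g hg hgR
  rw [hπ x hx, hπ y hy, hxy]

theorem apply_add_eq {v : ℂ} (hc : IsChirallyPerfect R c) (hv : v ∈ R) (hx : x ∈ R)
    (hy : y ∈ R) (hxy : c x = c y) : c (x + v) = c (y + v) :=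
  hc.apply_eq_apply ⟨1, v, norm_one, fun z => by rw [one_mul]⟩ (R.image_add_right hv) hx hy hxy

theorem apply_mul_eq {u : R} (hc : IsChirallyPerfect R c) (hu : IsUnit u) (hu1 : ‖(u : ℂ)‖ = 1)
    (hx : x ∈ R) (hy : y ∈ R) (hxy : c x = c y) : c (u * x) = c (u * y) :=
  hc.apply_eq_apply ⟨u, 0, hu1, fun _ => (add_zero _).symm⟩ (R.image_mul_left_of_isUnit hu)
    hx hy hxy

theorem apply_eq_iff_sub (hc : IsChirallyPerfect R c) (hx : x ∈ R) (hy : y ∈ R) :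
    c x = c y ↔ c (x - y) = c 0 := by
  constructor
  · intro hxy
    simpa [sub_eq_add_neg] using hc.apply_add_eq (R.neg_mem hy) hx hy hxy
  · intro hxy
    simpa using hc.apply_add_eq hy (R.sub_mem hx hy) R.zero_mem hxy

def zeroClass (hc : IsChirallyPerfect R c) : AddSubgroup R where
  carrier := {x | c x = c 0}
  zero_mem' := rfl
  add_mem' {a b} ha hb := by
    have := (hc.apply_eq_iff_sub (R.add_mem a.2 b.2) b.2).2 (by simpa using ha)
    exact this.trans hb
  neg_mem' {a} ha := by
    simpa using (hc.apply_eq_iff_sub R.zero_mem a.2).1 ha.symm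

@[simp]
theorem mem_zeroClass (hc : IsChirallyPerfect R c) {x : R} : x ∈ hc.zeroClass ↔ c x = c 0 :=
  Iff.rfl

theorem mul_mem_zeroClass {u x : R} (hc : IsChirallyPerfect R c) (hu : IsUnit u)
    (hu1 : ‖(u : ℂ)‖ = 1) (hx : x ∈ hc.zeroClass) : u * x ∈ hc.zeroClass :=
  (hc.apply_mul_eq hu hu1 x.2 R.zero_mem hx).trans (congrArg c (mul_zero _))

end IsChirallyPerfect

theorem isPrimitiveRoot_zeta {n : ℕ} (hn : n ≠ 0) : IsPrimitiveRoot (zeta n) n :=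
  Complex.isPrimitiveRoot_exp n hn

theorem isUnit_zetaR {n : ℕ} (hn : n ≠ 0) : IsUnit (zetaR n) :=
  (IsPrimitiveRoot.coe_submonoidClass_iff.1 (isPrimitiveRoot_zeta hn)).isUnit hn

theorem stmt3_general (n : ℕ) (hn : 3 ≤ n) {S : Type*}
    (c : ℂ → S)
    (hsurj : ∀ s : S, ∃ x ∈ (Rn n : Set ℂ), c x = s)
    (hcps : ∀ g : ℂ → ℂ, IsOPIsometry g → g '' (Rn n : Set ℂ) = (Rn n : Set ℂ) →
      ∃ π : Equiv.Perm S, ∀ x ∈ (Rn n : Set ℂ), c (g x) = π (c x)) :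
    ∃ J : Ideal ↥(Rn n),
      (∀ x : ↥(Rn n), x ∈ J ↔ c (x : ℂ) = c 0) ∧
      ∀ s : S, ∃ t : ↥(Rn n), ∀ x : ↥(Rn n),
        (c (x : ℂ) = s ↔ ∃ w ∈ J, x = w + t) := by
  have hc : IsChirallyPerfect (Rn n) c := hcps
  have hn0 : n ≠ 0 := by omega
  obtain ⟨J, hJ⟩ := AddSubgroup.exists_ideal_of_generators_mul_mem (R := Rn n) (s := {zeta n}) rfl
    hc.zeroClass fun z hz _ => by
    obtain rfl : z = zetaR n := Subtype.ext hz
    exact hc.mul_mem_zeroClass (isUnit_zetaR hn0) ((isPrimitiveRoot_zeta hn0).norm'_eq_one hn0)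
  refine ⟨J, fun x => (hJ x).trans hc.mem_zeroClass, fun s => ?_⟩
  obtain ⟨t, ht, rfl⟩ := hsurj s
  refine ⟨⟨t, ht⟩, fun x => ?_⟩
  rw [hc.apply_eq_iff_sub x.2 ht]
  constructor
  · exact fun hxt => ⟨x - ⟨t, ht⟩, (hJ _).2 hxt, (sub_add_cancel _ _).symm⟩
  · rintro ⟨w, hw, rfl⟩
    simpa using (hJ w).1 hw

/-- the colour class of `0` in a chirally perfect colouring is an ideal `J`
of `R`, and every colour class is a coset of `J`. -/
theorem stmt3 (n : ℕ) (hn : 3 ≤ n) (hn2 : n % 4 ≠ 2) {S : Type*}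
    (c : ℂ → S)
    (hsurj : ∀ s : S, ∃ x ∈ (Rn n : Set ℂ), c x = s)
    (hcps : ∀ g : ℂ → ℂ, IsOPIsometry g → g '' (Rn n : Set ℂ) = (Rn n : Set ℂ) →
      ∃ π : Equiv.Perm S, ∀ x ∈ (Rn n : Set ℂ), c (g x) = π (c x)) :
    ∃ J : Ideal ↥(Rn n),
      (∀ x : ↥(Rn n), x ∈ J ↔ c (x : ℂ) = c 0) ∧
      ∀ s : S, ∃ t : ↥(Rn n), ∀ x : ↥(Rn n),
        (c (x : ℂ) = s ↔ ∃ w ∈ J, x = w + t) :=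
  stmt3_general n hn c hsurj hcps
end

section
/- Let q be a nonzero Gaussian integer and let ℓ = q·conj(q) be its norm. (1) If no rational prime p with p ≡ 1 (mod 4) divides ℓ, then conj(q) ∈ q·ℤ[i], so the colouring of ℤ[i] induced by q·ℤ[i] is perfect. (2) If q = m, or q = i·m, or q = (1 + i)^k·m, or q = (1 − i)^k·m for some nonzero integers m and k, then conj(q) ∈ q·ℤ[i] and the colouring is perfect. (3) In all other cases conj(q) ∉ q·ℤ[i], and the colouring is chirally perfect but not perfect. -/
open Complex

/-- The Gaussian integers `ℤ[i]` as a subring of `ℂ`. -/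
noncomputable def RG : Subring ℂ := Subring.closure {Complex.I}

/-- `z ∈ ℂ` lies in the ideal `I` of `ℤ[i]` (viewed inside `ℂ`). -/
def InIdealG (I : Ideal ↥RG) (z : ℂ) : Prop := ∃ w : ↥RG, w ∈ I ∧ (w : ℂ) = z

/-- `g` is a colour symmetry of the colouring of `ℤ[i]` induced by the ideal `I`. -/
def IsColourSymG (I : Ideal ↥RG) (g : ℂ → ℂ) : Prop :=
  ∀ x y : ℂ, x ∈ RG → y ∈ RG → (InIdealG I (x - y) ↔ InIdealG I (g x - g y))

/-- The colouring of `ℤ[i]` induced by `I` is perfect. -/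
def IsPerfectColouringG (I : Ideal ↥RG) : Prop :=
  ∀ g : ℂ → ℂ, IsIsometry g → g '' (RG : Set ℂ) = (RG : Set ℂ) → IsColourSymG I g

/-- The colouring of `ℤ[i]` induced by `I` is chirally perfect. -/
def IsChirallyPerfectColouringG (I : Ideal ↥RG) : Prop :=
  ∀ g : ℂ → ℂ, IsOPIsometry g → g '' (RG : Set ℂ) = (RG : Set ℂ) → IsColourSymG I g

/-!
A colour symmetry of `ℤ[i]` acts on differences `x - y` by `w ↦ a w` (rotations) or
`w ↦ a conj w` (reflections) with `a` a unit of `ℤ[i]`. Multiplication by a unit preserves every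
ideal, so every colouring is chirally perfect, and the colouring by `(q)` is perfect iff
`q ∣ conj q`. Comparing norms, `q ∣ conj q` means `conj q = u q` with `u ∈ {±1, ±i}`, which puts
`q` on one of the four lines of (2). For (1) descend on the norm: a prime factor `2` or
`p ≡ 3 (mod 4)` of `ℓ` splits off a factor `1 + i` or `p` of `q`, and both divide their own
conjugates.
-/

open ComplexConjugate

namespace GaussianInt

lemma dvd_star_mul {w z : GaussianInt} (hw : w ∣ star w) (hz : z ∣ star z) :
    w * z ∣ star (w * z) := by
  rw [star_mul']
  exact mul_dvd_mul hw hz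

lemma one_add_I_dvd_star : (⟨1, 1⟩ : GaussianInt) ∣ star ⟨1, 1⟩ :=
  ⟨⟨0, -1⟩, by decide⟩

lemma one_add_I_dvd_of_two_dvd_norm {z : GaussianInt} (h : 2 ∣ z.norm) : ⟨1, 1⟩ ∣ z := by
  have hsq : 2 ∣ (z.re + z.im) * (z.re + z.im) := by
    have hexp : (z.re + z.im) * (z.re + z.im) = z.norm + 2 * (z.re * z.im) := by
      rw [Zsqrtd.norm_def]
      ring
    rw [hexp]
    exact dvd_add h (dvd_mul_right _ _)
  obtain ⟨s, hs⟩ := (Int.prime_two.dvd_mul.1 hsq).elim id id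
  refine ⟨⟨s, z.im - s⟩, ?_⟩
  ext <;> simp only [Zsqrtd.re_mul, Zsqrtd.im_mul] <;> linarith

lemma natCast_dvd_of_dvd_norm {p : ℕ} [Fact p.Prime] (hp3 : p % 4 = 3) {z : GaussianInt}
    (h : (p : ℤ) ∣ z.norm) : (p : GaussianInt) ∣ z := by
  have hzz : (p : GaussianInt) ∣ z * star z := by
    rw [← Zsqrtd.norm_eq_mul_conj]
    simpa using map_dvd (Int.castRingHom GaussianInt) h
  rcases (prime_of_nat_prime_of_mod_four_eq_three p hp3).dvd_or_dvd hzz with h | h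
  · exact h
  · simpa [starRingEnd_apply] using map_dvd (starRingEnd GaussianInt) h

lemma exists_dvd_star_dvd_of_prime_dvd_norm {p : ℕ} (hp : p.Prime) (hp1 : p % 4 ≠ 1)
    {z : GaussianInt} (hpz : p ∣ z.norm.natAbs) :
    ∃ w : GaussianInt, w ∣ star w ∧ 1 < w.norm.natAbs ∧ w ∣ z := by
  have hpz : (p : ℤ) ∣ z.norm := Int.natCast_dvd.2 hpz
  rcases hp.eq_two_or_odd' with rfl | hodd
  · exact ⟨⟨1, 1⟩, one_add_I_dvd_star, by decide, one_add_I_dvd_of_two_dvd_norm hpz⟩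
  · have : Fact p.Prime := ⟨hp⟩
    have hp3 : p % 4 = 3 := by obtain ⟨k, rfl⟩ := hodd; omega
    refine ⟨p, by rw [star_natCast], ?_, natCast_dvd_of_dvd_norm hp3 hpz⟩
    rw [Zsqrtd.norm_natCast, Int.natAbs_mul, Int.natAbs_natCast]
    nlinarith [hp.two_le]

theorem dvd_star_of_forall_prime_dvd_norm (z : GaussianInt)
    (h : ∀ p : ℕ, p.Prime → p % 4 = 1 → ¬ p ∣ z.norm.natAbs) : z ∣ star z := by
  induction hn : z.norm.natAbs using Nat.strong_induction_on generalizing z with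
  | _ n ih =>
  obtain rfl | hz := eq_or_ne z 0
  · simp
  obtain hn1 | hn1 := eq_or_ne n 1
  · exact (Zsqrtd.norm_eq_one_iff.1 (hn.trans hn1)).dvd
  have hp := Nat.minFac_prime hn1
  have hpz : n.minFac ∣ z.norm.natAbs := hn ▸ Nat.minFac_dvd n
  obtain ⟨w, hw, hw1, z', rfl⟩ :=
    exists_dvd_star_dvd_of_prime_dvd_norm hp (fun h1 => h _ hp h1 hpz) hpz
  have hnorm : n = w.norm.natAbs * z'.norm.natAbs := by
    rw [← hn, Zsqrtd.norm_mul, Int.natAbs_mul]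
  have hz' : 0 < z'.norm.natAbs := Int.natAbs_pos.2 (norm_pos.2 (right_ne_zero_of_mul hz)).ne'
  refine dvd_star_mul hw (ih _ ?_ z' (fun p hp hp1 hpz => h p hp hp1 ?_) rfl)
  · nlinarith
  · rw [hn, hnorm]
    exact hpz.mul_left _

lemma re_im_of_dvd_star {z : GaussianInt} (h : z ∣ star z) :
    z.im = 0 ∨ z.re = 0 ∨ z.re = z.im ∨ z.re = -z.im := by
  obtain rfl | hz := eq_or_ne z 0
  · simp
  obtain ⟨⟨a, b⟩, hu⟩ := h
  have hab : a * a + b * b = 1 := by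
    have hnorm := congrArg Zsqrtd.norm hu
    rw [Zsqrtd.norm_conj, Zsqrtd.norm_mul] at hnorm
    have : Zsqrtd.norm ⟨a, b⟩ = 1 :=
      mul_left_cancel₀ (norm_pos.2 hz).ne' (hnorm.symm.trans (mul_one _).symm)
    simpa [Zsqrtd.norm_def] using this
  have hre := congrArg Zsqrtd.re hu
  have him := congrArg Zsqrtd.im hu
  simp only [Zsqrtd.re_star, Zsqrtd.im_star, Zsqrtd.re_mul, Zsqrtd.im_mul] at hre him
  have ha : -1 ≤ a ∧ a ≤ 1 := by constructor <;> nlinarith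
  have hb : -1 ≤ b ∧ b ≤ 1 := by constructor <;> nlinarith
  obtain ⟨ha0, ha1⟩ := ha
  obtain ⟨hb0, hb1⟩ := hb
  interval_cases a <;> interval_cases b <;> omega

lemma exists_int_eq_of_dvd_star {z : GaussianInt} (hz : z ≠ 0) (h : z ∣ star z) :
    ∃ m k : ℤ, m ≠ 0 ∧ k ≠ 0 ∧ ((z : ℂ) = m ∨ (z : ℂ) = I * m ∨
      (z : ℂ) = (1 + I) ^ k * m ∨ (z : ℂ) = (1 - I) ^ k * m) := by
  obtain ⟨x, y⟩ := z
  have hxy : ∀ m, x = m → y = m → m ≠ 0 := by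
    rintro m rfl rfl rfl
    exact hz rfl
  rw [toComplex_def']
  rcases re_im_of_dvd_star h with h | h | h | h <;> dsimp only at h <;> subst h
  · exact ⟨x, 1, fun hx => hxy 0 hx rfl rfl, one_ne_zero, Or.inl (by simp)⟩
  · exact ⟨y, 1, fun hy => hxy 0 rfl hy rfl, one_ne_zero, Or.inr (Or.inl (by ring))⟩
  · exact ⟨x, 1, hxy x rfl rfl, one_ne_zero, Or.inr (Or.inr (Or.inl (by rw [zpow_one]; ring)))⟩
  · refine ⟨-y, 1, fun hy => hxy 0 hy (by omega) rfl, one_ne_zero, Or.inr (Or.inr (Or.inr ?_))⟩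
    rw [zpow_one]
    push_cast
    ring

end GaussianInt

lemma I_mem_RG : I ∈ RG :=
  Subring.subset_closure rfl

lemma mem_RG_iff {z : ℂ} : z ∈ RG ↔ ∃ w : GaussianInt, (w : ℂ) = z := by
  constructor
  · intro hz
    have hI : {I} ⊆ (GaussianInt.toComplex.range : Set ℂ) :=
      Set.singleton_subset_iff.2 ⟨⟨0, 1⟩, by simp [GaussianInt.toComplex_def']⟩
    exact Subring.closure_le.2 hI hz
  · rintro ⟨w, rfl⟩
    rw [GaussianInt.toComplex_def]
    exact add_mem (intCast_mem _ _) (mul_mem (intCast_mem _ _) I_mem_RG)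

lemma conj_mem_RG {z : ℂ} (hz : z ∈ RG) : conj z ∈ RG := by
  obtain ⟨w, rfl⟩ := mem_RG_iff.1 hz
  exact mem_RG_iff.2 ⟨star w, GaussianInt.toComplex_star w⟩

lemma conj_image_RG : conj '' (RG : Set ℂ) = (RG : Set ℂ) :=
  Set.Subset.antisymm (Set.image_subset_iff.2 fun _ => conj_mem_RG)
    fun z hz => ⟨conj z, conj_mem_RG hz, conj_conj z⟩

lemma I_zpow_mem_RG (k : ℤ) : I ^ k ∈ RG := by
  induction k using Int.induction_on with
  | zero => simp [one_mem]
  | succ n h => rw [zpow_add_one₀ I_ne_zero]; exact mul_mem h I_mem_RG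
  | pred n h => rw [zpow_sub_one₀ I_ne_zero, inv_I]; exact mul_mem h (neg_mem I_mem_RG)

lemma sub_mem_RG_of_image_eq {g : ℂ → ℂ} (hg : g '' (RG : Set ℂ) = RG) {x y : ℂ}
    (hx : x ∈ RG) (hy : y ∈ RG) : g x - g y ∈ RG := by
  have hmem : ∀ {z}, z ∈ RG → g z ∈ RG := fun hz => by
    rw [← SetLike.mem_coe, ← hg]
    exact Set.mem_image_of_mem g hz
  exact sub_mem (hmem hx) (hmem hy)

section Colouring

variable {I : Ideal RG}

lemma InIdealG.mem_RG {z : ℂ} (h : InIdealG I z) : z ∈ RG := by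
  obtain ⟨w, -, rfl⟩ := h
  exact w.2

lemma InIdealG.mul_left {a z : ℂ} (ha : a ∈ RG) (h : InIdealG I z) : InIdealG I (a * z) := by
  obtain ⟨w, hw, rfl⟩ := h
  exact ⟨⟨a, ha⟩ * w, I.mul_mem_left _ hw, rfl⟩

lemma inIdealG_mul_left_iff {a z : ℂ} (ha : a ∈ RG) (ha1 : ‖a‖ = 1) :
    InIdealG I (a * z) ↔ InIdealG I z := by
  refine ⟨fun h => ?_, InIdealG.mul_left ha⟩
  have hconj : conj a * a = 1 := by
    rw [mul_comm, mul_conj, normSq_eq_norm_sq, ha1]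
    norm_num
  simpa [← mul_assoc, hconj] using h.mul_left (conj_mem_RG ha)

lemma isColourSymG_of_sub_eq_mul {g : ℂ → ℂ} {a : ℂ} (ha : a ∈ RG) (ha1 : ‖a‖ = 1)
    (hg : ∀ x y, g x - g y = a * (x - y)) : IsColourSymG I g := fun x y _ _ => by
  rw [hg, inIdealG_mul_left_iff ha ha1]

variable (I)

theorem isChirallyPerfectColouringG : IsChirallyPerfectColouringG I := by
  rintro g ⟨a, b, ha1, hg⟩ himg
  have ha : a ∈ RG := by simpa [hg] using sub_mem_RG_of_image_eq himg (one_mem _) (zero_mem _)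
  exact isColourSymG_of_sub_eq_mul ha ha1 fun x y => by rw [hg, hg]; ring

theorem isPerfectColouringG_iff :
    IsPerfectColouringG I ↔ ∀ z, InIdealG I z → InIdealG I (conj z) := by
  constructor
  · intro hI z hz
    have hconj : IsIsometry conj := ⟨1, 0, by simp, Or.inr fun z => by simp⟩
    simpa using (hI _ hconj conj_image_RG z 0 hz.mem_RG (zero_mem _)).1 (by simpa using hz)
  · rintro hI g ⟨a, b, ha1, hg | hg⟩ himg
    · exact isChirallyPerfectColouringG I g ⟨a, b, ha1, hg⟩ himg
    have ha : a ∈ RG := by simpa [hg] using sub_mem_RG_of_image_eq himg (one_mem _) (zero_mem _)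
    intro x y _ _
    rw [show g x - g y = a * conj (x - y) by rw [hg, hg, map_sub]; ring,
      inIdealG_mul_left_iff ha ha1]
    exact ⟨hI _, fun h => by simpa using hI _ h⟩

end Colouring

section Principal

variable {q : RG}

lemma inIdealG_span_singleton_iff {z : ℂ} :
    InIdealG (Ideal.span {q}) z ↔ ∃ c ∈ RG, z = q * c := by
  constructor
  · rintro ⟨w, hw, rfl⟩
    obtain ⟨c, rfl⟩ := Ideal.mem_span_singleton.1 hw
    exact ⟨c, c.2, rfl⟩
  · rintro ⟨c, hc, rfl⟩
    exact ⟨q * ⟨c, hc⟩, Ideal.mem_span_singleton.2 (dvd_mul_right _ _), rfl⟩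

theorem isPerfectColouringG_span_singleton_iff :
    IsPerfectColouringG (Ideal.span {q}) ↔ InIdealG (Ideal.span {q}) (conj (q : ℂ)) := by
  rw [isPerfectColouringG_iff]
  refine ⟨fun h => h q (inIdealG_span_singleton_iff.2 ⟨1, one_mem _, (mul_one _).symm⟩), ?_⟩
  simp only [inIdealG_span_singleton_iff]
  rintro ⟨u, hu, hqu⟩ z ⟨c, hc, rfl⟩
  exact ⟨u * conj c, mul_mem hu (conj_mem_RG hc), by rw [map_mul, hqu]; ring⟩

lemma inIdealG_span_conj_iff_dvd_star {z : GaussianInt} (hz : (z : ℂ) = q) :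
    InIdealG (Ideal.span {q}) (conj (q : ℂ)) ↔ z ∣ star z := by
  rw [inIdealG_span_singleton_iff, ← hz, ← GaussianInt.toComplex_star]
  constructor
  · rintro ⟨c, hc, hzc⟩
    obtain ⟨w, rfl⟩ := mem_RG_iff.1 hc
    exact ⟨w, GaussianInt.toComplex_injective (by rw [hzc, map_mul])⟩
  · rintro ⟨w, hw⟩
    exact ⟨w, mem_RG_iff.2 ⟨w, rfl⟩, by rw [hw, map_mul]⟩

lemma inIdealG_span_conj_of_eq_int_mul
    (h : ∃ m k : ℤ, m ≠ 0 ∧ k ≠ 0 ∧ ((q : ℂ) = m ∨ (q : ℂ) = I * m ∨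
      (q : ℂ) = (1 + I) ^ k * m ∨ (q : ℂ) = (1 - I) ^ k * m)) :
    InIdealG (Ideal.span {q}) (conj (q : ℂ)) := by
  rw [inIdealG_span_singleton_iff]
  obtain ⟨m, k, -, -, h | h | h | h⟩ := h
  · exact ⟨1, one_mem _, by rw [h, map_intCast, mul_one]⟩
  · exact ⟨-1, neg_mem (one_mem _), by rw [h, map_mul, conj_I, map_intCast]; ring⟩
  · refine ⟨(-I) ^ k, by rw [← inv_I, inv_zpow']; exact I_zpow_mem_RG _, ?_⟩
    rw [h, map_mul, map_zpow₀, map_add, map_one, conj_I, map_intCast,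
      show 1 + -I = (1 + I) * -I by linear_combination I_sq, mul_zpow]
    ring
  · refine ⟨I ^ k, I_zpow_mem_RG _, ?_⟩
    rw [h, map_mul, map_zpow₀, map_sub, map_one, conj_I, map_intCast, sub_neg_eq_add,
      show 1 + I = (1 - I) * I by linear_combination I_sq, mul_zpow]
    ring

end Principal

/-- colourings of the square lattice `ℤ[i]` induced by `(q)`, with
`ℓ = q conj(q)` colours: (1) if no rational prime `p ≡ 1 (mod 4)` divides `ℓ`, the
colouring is perfect; (2) if `q = m`, `q = i m`, `q = (1+i)^k m` or `q = (1-i)^k m`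
with `m, k` nonzero integers, it is perfect; (3) otherwise it is chirally perfect but
not perfect. -/
theorem stmt6 (q : ↥RG) (hq : q ≠ 0) (ℓ : ℕ)
    (hℓ : (ℓ : ℂ) = (q : ℂ) * (starRingEnd ℂ) (q : ℂ)) :
    ((∀ p : ℕ, p.Prime → p % 4 = 1 → ¬ (p ∣ ℓ)) →
      InIdealG (Ideal.span {q}) ((starRingEnd ℂ) (q : ℂ)) ∧
        IsPerfectColouringG (Ideal.span {q})) ∧
    ((∃ m k : ℤ, m ≠ 0 ∧ k ≠ 0 ∧
        ((q : ℂ) = (m : ℂ) ∨ (q : ℂ) = Complex.I * (m : ℂ) ∨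
          (q : ℂ) = (1 + Complex.I) ^ k * (m : ℂ) ∨
          (q : ℂ) = (1 - Complex.I) ^ k * (m : ℂ))) →
      InIdealG (Ideal.span {q}) ((starRingEnd ℂ) (q : ℂ)) ∧
        IsPerfectColouringG (Ideal.span {q})) ∧
    ((¬ (∀ p : ℕ, p.Prime → p % 4 = 1 → ¬ (p ∣ ℓ))) →
      (¬ (∃ m k : ℤ, m ≠ 0 ∧ k ≠ 0 ∧
        ((q : ℂ) = (m : ℂ) ∨ (q : ℂ) = Complex.I * (m : ℂ) ∨
          (q : ℂ) = (1 + Complex.I) ^ k * (m : ℂ) ∨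
          (q : ℂ) = (1 - Complex.I) ^ k * (m : ℂ)))) →
      ¬ InIdealG (Ideal.span {q}) ((starRingEnd ℂ) (q : ℂ)) ∧
        IsChirallyPerfectColouringG (Ideal.span {q}) ∧
        ¬ IsPerfectColouringG (Ideal.span {q})) := by
  obtain ⟨z, hz⟩ := mem_RG_iff.1 q.2
  have hz0 : z ≠ 0 := fun h => hq (Subtype.ext (by rw [← hz, h, map_zero, ZeroMemClass.coe_zero]))
  have hnorm : z.norm.natAbs = ℓ := by
    have h : ((z.norm : ℤ) : ℂ) = ((ℓ : ℤ) : ℂ) := by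
      rw [GaussianInt.intCast_complex_norm, Int.cast_natCast, hℓ, ← hz, mul_conj]
    rw [Int.cast_inj.1 h, Int.natAbs_natCast]
  refine ⟨fun hp => ?_, fun h => ?_, fun _ h => ?_⟩
  · have hc := (inIdealG_span_conj_iff_dvd_star hz).2
      (z.dvd_star_of_forall_prime_dvd_norm (hnorm ▸ hp))
    exact ⟨hc, isPerfectColouringG_span_singleton_iff.2 hc⟩
  · have hc := inIdealG_span_conj_of_eq_int_mul h
    exact ⟨hc, isPerfectColouringG_span_singleton_iff.2 hc⟩
  · have hc : ¬ InIdealG (Ideal.span {q}) (conj (q : ℂ)) := fun hc =>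
      h (hz ▸ z.exists_int_eq_of_dvd_star hz0 ((inIdealG_span_conj_iff_dvd_star hz).1 hc))
    exact ⟨hc, isChirallyPerfectColouringG _, mt isPerfectColouringG_span_singleton_iff.1 hc⟩
end

section
/- Let I be an ideal of R with card(R/I) = 2. Let H be the group (under composition) of all colour symmetries of the colouring induced by I, and let K be the colour preserving group; K is a normal subgroup of H. Then the short exact sequence 1 → K → H → H/K → 1 splits: there exists a group homomorphism s : H/K → H such that the canonical projection H → H/K composed with s is the identity on H/K. In other words, H is a semidirect product K ⋊ H/K. -/
/-!
Since `R ⧸ I` has two elements, `2 ∈ I` and any two elements outside `I` are congruent modulo `I`.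
A colour symmetry `g` preserves whether `x - y ∈ I`, so `g x - g y ≡ x - y` and hence
`g x - x ≡ g 0` modulo `I`: `g` either fixes both colours (`g ∈ K`) or swaps them. The point
reflection `t : z ↦ 1 - z` is an involution in `H` that swaps the colours, so every `g ∈ H` lies
in `K` or in `K t`, and `H ⧸ K → H` sending the trivial class to `1` and the other one to `t`
is a splitting.
-/

open Complex

theorem nontrivial_of_natCard_eq_two {α : Type*} (h : Nat.card α = 2) : Nontrivial α := by
  obtain ⟨x, y, hxy, -⟩ := Nat.card_eq_two_iff.1 h
  exact ⟨x, y, hxy⟩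

section CardTwo

variable {T : Type*} [Ring T]

theorem eq_zero_or_eq_one_of_natCard_eq_two (h : Nat.card T = 2) (a : T) : a = 0 ∨ a = 1 := by
  have := nontrivial_of_natCard_eq_two h
  obtain ⟨y, -, hy⟩ := (Nat.card_eq_two_iff' (0 : T)).1 h
  by_cases ha : a = 0
  · exact .inl ha
  · exact .inr ((hy a ha).trans (hy 1 one_ne_zero).symm)

theorem two_eq_zero_of_natCard_eq_two (h : Nat.card T = 2) : (2 : T) = 0 := by
  have := nontrivial_of_natCard_eq_two h
  refine (eq_zero_or_eq_one_of_natCard_eq_two h 2).resolve_right fun h2 => one_ne_zero (α := T) ?_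
  exact add_left_cancel (a := 1) (by rw [one_add_one_eq_two, h2, add_zero])

theorem eq_of_eq_zero_iff_of_natCard_eq_two (h : Nat.card T = 2) {a b : T}
    (hab : a = 0 ↔ b = 0) : a = b := by
  rcases eq_zero_or_eq_one_of_natCard_eq_two h a with rfl | rfl <;>
    rcases eq_zero_or_eq_one_of_natCard_eq_two h b with rfl | rfl <;> simp_all

end CardTwo

section IndexTwoIdeal

variable {S : Type*} [CommRing S] {I : Ideal S} {f : S → S}

theorem Ideal.Quotient.mk_apply_eq_add_of_natCard_eq_two (h : Nat.card (S ⧸ I) = 2)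
    (hf : ∀ x y, x - y ∈ I ↔ f x - f y ∈ I) (x : S) :
    Ideal.Quotient.mk I (f x) = Ideal.Quotient.mk I x + Ideal.Quotient.mk I (f 0) := by
  have := eq_of_eq_zero_iff_of_natCard_eq_two h
    (a := Ideal.Quotient.mk I (f x - f 0)) (b := Ideal.Quotient.mk I (x - 0))
    (by simp only [Ideal.Quotient.eq_zero_iff_mem, hf x 0])
  rw [map_sub, map_sub, map_zero, sub_zero] at this
  rw [← this, sub_add_cancel]

theorem forall_sub_mem_or_forall_sub_mem_of_natCard_eq_two (h : Nat.card (S ⧸ I) = 2)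
    (hf : ∀ x y, x - y ∈ I ↔ f x - f y ∈ I) :
    (∀ x, f x - x ∈ I) ∨ ∀ x, f (1 - x) - x ∈ I := by
  simp only [← Ideal.Quotient.eq_zero_iff_mem, map_sub]
  rcases eq_zero_or_eq_one_of_natCard_eq_two h (Ideal.Quotient.mk I (f 0)) with h0 | h1
  · refine .inl fun x => ?_
    rw [Ideal.Quotient.mk_apply_eq_add_of_natCard_eq_two h hf, h0, add_zero, sub_self]
  · refine .inr fun x => ?_
    rw [Ideal.Quotient.mk_apply_eq_add_of_natCard_eq_two h hf, h1, map_sub, map_one]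
    linear_combination (1 - Ideal.Quotient.mk I x) * two_eq_zero_of_natCard_eq_two h

end IndexTwoIdeal

theorem QuotientGroup.exists_splitting_of_forall_mem_or_mul_mem {G : Type*} [Group G]
    (K : Subgroup G) [K.Normal] {t : G} (ht : t * t = 1) (h : ∀ g, g ∈ K ∨ g * t ∈ K) :
    ∃ s : G ⧸ K →* G, ∀ x, (s x : G ⧸ K) = x := by
  classical
  have htt : (t : G ⧸ K) * t = 1 := by rw [← QuotientGroup.mk_mul, ht, QuotientGroup.mk_one]
  have hq : ∀ x : G ⧸ K, x = 1 ∨ x = t := QuotientGroup.mk_surjective.forall.2 fun g =>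
    (h g).imp (QuotientGroup.eq_one_iff g).2 fun hg => by
      have hgt : (g : G ⧸ K) * t = 1 := by
        rw [← QuotientGroup.mk_mul, QuotientGroup.eq_one_iff]; exact hg
      rw [eq_inv_of_mul_eq_one_left hgt, inv_eq_of_mul_eq_one_right htt]
  refine ⟨{ toFun := fun x => if x = 1 then 1 else t, map_one' := if_pos rfl, map_mul' := ?_ }, ?_⟩
  · intro x y
    rcases hq x with rfl | rfl <;> rcases hq y with rfl | rfl <;> split_ifs <;> simp_all
  · intro x
    change ((if x = 1 then 1 else t : G) : G ⧸ K) = x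
    rcases hq x with rfl | rfl <;> split_ifs with h1 <;> simp_all

theorem image_subLeft_eq_self {G S : Type*} [AddCommGroup G] [SetLike S G] [AddSubgroupClass S G]
    (s : S) {a : G} (ha : a ∈ s) : Equiv.subLeft a '' (s : Set G) = s :=
  Set.Subset.antisymm (Set.image_subset_iff.2 fun _ hz => sub_mem ha hz)
    fun z hz => ⟨a - z, sub_mem ha hz, Equiv.subLeft_involutive a z⟩

theorem isIsometry_subLeft (a : ℂ) : IsIsometry (Equiv.subLeft a) :=
  ⟨-1, a, by simp, .inl fun z => by simp [Equiv.subLeft_apply]; ring⟩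

section ColourSymmetry

variable {n : ℕ} {I : Ideal (Rn n)}

theorem inIdeal_coe_iff (a : Rn n) : InIdeal n I a ↔ a ∈ I :=
  ⟨fun ⟨_, hw, hwa⟩ => Subtype.ext hwa ▸ hw, fun ha => ⟨a, ha, rfl⟩⟩

theorem inIdeal_neg_iff {z : ℂ} : InIdeal n I (-z) ↔ InIdeal n I z :=
  ⟨fun ⟨w, hw, hwz⟩ => ⟨-w, I.neg_mem hw, by simp [hwz]⟩,
    fun ⟨w, hw, hwz⟩ => ⟨-w, I.neg_mem hw, by simp [hwz]⟩⟩

theorem isColourSym_subLeft (a : ℂ) : IsColourSym n I (Equiv.subLeft a) := fun x y _ _ => by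
  rw [Equiv.subLeft_apply, Equiv.subLeft_apply, sub_sub_sub_cancel_left, ← neg_sub, inIdeal_neg_iff]

theorem IsColourSym.sub_mem_iff {g : ℂ → ℂ} (h : IsColourSym n I g)
    (hg : Set.MapsTo g (Rn n) (Rn n)) (x y : Rn n) :
    x - y ∈ I ↔ Subtype.map g (fun _ hz => hg hz) x - Subtype.map g (fun _ hz => hg hz) y ∈ I := by
  rw [← inIdeal_coe_iff, ← inIdeal_coe_iff]
  exact h x y x.2 y.2

theorem forall_inIdeal_sub_of_forall_sub_mem {g : ℂ → ℂ} (hg : Set.MapsTo g (Rn n) (Rn n))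
    (h : ∀ x : Rn n, Subtype.map g (fun _ hz => hg hz) x - x ∈ I) :
    ∀ x ∈ (Rn n : Set ℂ), InIdeal n I (g x - x) :=
  fun x hx => (inIdeal_coe_iff _).2 (h ⟨x, hx⟩)

end ColourSymmetry

theorem stmt7_general (n : ℕ) (I : Ideal ↥(Rn n))
    (hcard : Nat.card (↥(Rn n) ⧸ I) = 2)
    (H : Subgroup (Equiv.Perm ℂ))
    (hH : ∀ g : Equiv.Perm ℂ, g ∈ H ↔
      (IsIsometry ⇑g ∧ ⇑g '' (Rn n : Set ℂ) = (Rn n : Set ℂ) ∧ IsColourSym n I ⇑g))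
    (K : Subgroup ↥H)
    (hK : ∀ g : ↥H, g ∈ K ↔ ∀ x ∈ (Rn n : Set ℂ), InIdeal n I ((g : Equiv.Perm ℂ) x - x))
    [hKn : K.Normal] :
    ∃ s : (↥H ⧸ K) →* ↥H, ∀ x : ↥H ⧸ K, (QuotientGroup.mk (s x) : ↥H ⧸ K) = x := by
  have hmaps (g : H) : Set.MapsTo (g : Equiv.Perm ℂ) (Rn n) (Rn n) :=
    Set.mapsTo_iff_image_subset.2 ((hH g).1 g.2).2.1.subset
  let t : H := ⟨Equiv.subLeft 1, (hH _).2
    ⟨isIsometry_subLeft 1, image_subLeft_eq_self (Rn n) (Rn n).one_mem, isColourSym_subLeft 1⟩⟩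
  refine QuotientGroup.exists_splitting_of_forall_mem_or_mul_mem K (t := t)
    (Subtype.ext (Equiv.ext (Equiv.subLeft_involutive 1))) fun g => ?_
  rcases forall_sub_mem_or_forall_sub_mem_of_natCard_eq_two hcard
      (((hH g).1 g.2).2.2.sub_mem_iff (hmaps g)) with hg | hgt
  · exact .inl ((hK g).2 (forall_inIdeal_sub_of_forall_sub_mem (hmaps g) hg))
  -- `(g * t) x` unfolds to `g (1 - x)`
  · exact .inr ((hK _).2 (forall_inIdeal_sub_of_forall_sub_mem (hmaps (g * t)) hgt))

/-- for a `2`-colouring, the short exact sequence `1 → K → H → H/K → 1`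
splits, i.e. `H = K ⋊ H/K`. -/
theorem stmt7 (n : ℕ) (hn : 3 ≤ n) (hn2 : n % 4 ≠ 2) (I : Ideal ↥(Rn n))
    (hcard : Nat.card (↥(Rn n) ⧸ I) = 2)
    (H : Subgroup (Equiv.Perm ℂ))
    (hH : ∀ g : Equiv.Perm ℂ, g ∈ H ↔
      (IsIsometry ⇑g ∧ ⇑g '' (Rn n : Set ℂ) = (Rn n : Set ℂ) ∧ IsColourSym n I ⇑g))
    (K : Subgroup ↥H)
    (hK : ∀ g : ↥H, g ∈ K ↔ ∀ x ∈ (Rn n : Set ℂ), InIdeal n I ((g : Equiv.Perm ℂ) x - x))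
    [hKn : K.Normal] :
    ∃ s : (↥H ⧸ K) →* ↥H, ∀ x : ↥H ⧸ K, (QuotientGroup.mk (s x) : ↥H ⧸ K) = x :=
  stmt7_general n I hcard H hH K hK (hKn := hKn)
end

section
/- Let I be an ideal of R such that card(R/I) is a rational prime and conj(x) ∈ I for every x ∈ I (so the colouring induced by I is perfect). Then conj(z) − z ∈ I for every z ∈ R; that is, the reflection z ↦ conj(z) belongs to the colour preserving group K, and hence T_I ⋊ C₂ is a subgroup of K. -/
open Complex

/-!
Since `R/I` has prime order, it is generated additively by `1`, so every `z ∈ R` is congruent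
modulo `I` to a rational integer `k`. Conjugation fixes `k` and maps `I` into itself, hence
`conj z - z = conj (z - k) - (z - k) ∈ I`.
-/

theorem Ideal.exists_sub_intCast_mem_of_card_quotient_prime {R : Type*} [CommRing R]
    {I : Ideal R} (hI : (Nat.card (R ⧸ I)).Prime) (x : R) : ∃ k : ℤ, x - k ∈ I := by
  have : Fact (Nat.card (R ⧸ I)).Prime := ⟨hI⟩
  have hone : (1 : R ⧸ I) ≠ 0 := by
    intro h
    have : Subsingleton (R ⧸ I) := subsingleton_of_zero_eq_one h.symm
    exact hI.ne_one (Nat.card_of_subsingleton 0)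
  obtain ⟨k, hk⟩ := AddSubgroup.mem_zmultiples_iff.mp
    (mem_zmultiples_of_prime_card rfl hone (g' := Ideal.Quotient.mk I x))
  refine ⟨k, Ideal.Quotient.eq.mp ?_⟩
  rw [← hk, map_intCast, zsmul_one]

theorem Subring.exists_mem_ideal_coe_eq_map_sub_self {A : Type*} [CommRing A] {S : Subring A}
    {I : Ideal S} (hI : (Nat.card (S ⧸ I)).Prime) (σ : A →+* A)
    (hσ : ∀ x ∈ I, ∃ w ∈ I, (w : A) = σ x) (z : S) : ∃ w ∈ I, (w : A) = σ z - z := by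
  obtain ⟨k, hk⟩ := Ideal.exists_sub_intCast_mem_of_card_quotient_prime hI z
  obtain ⟨w, hwI, hw⟩ := hσ _ hk
  refine ⟨w - (z - k), I.sub_mem hwI hk, ?_⟩
  simp only [AddSubgroupClass.coe_sub, hw, SubringClass.coe_intCast, map_sub, map_intCast]
  ring

theorem stmt16_general (n : ℕ) (I : Ideal ↥(Rn n))
    (hprime : (Nat.card (↥(Rn n) ⧸ I)).Prime)
    (hconj : ∀ x : ↥(Rn n), x ∈ I → InIdeal n I ((starRingEnd ℂ) (x : ℂ))) :
    ∀ z ∈ (Rn n : Set ℂ), InIdeal n I ((starRingEnd ℂ) z - z) :=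
  fun z hz => Subring.exists_mem_ideal_coe_eq_map_sub_self hprime _ hconj ⟨z, hz⟩

/-- if `card(R/I)` is a rational prime and `I` is stable under complex
conjugation, then `conj z - z ∈ I` for every `z ∈ R`; that is, the reflection
`z ↦ conj z` lies in `K`, so `T_I ⋊ C₂` is a subgroup of `K`. -/
theorem stmt16 (n : ℕ) (hn : 3 ≤ n) (hn2 : n % 4 ≠ 2) (I : Ideal ↥(Rn n))
    (hprime : (Nat.card (↥(Rn n) ⧸ I)).Prime)
    (hconj : ∀ x : ↥(Rn n), x ∈ I → InIdeal n I ((starRingEnd ℂ) (x : ℂ))) :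
    ∀ z ∈ (Rn n : Set ℂ), InIdeal n I ((starRingEnd ℂ) z - z) :=
  stmt16_general n I hprime hconj
end
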